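/- arXiv:1903.12291 — 12 statements merged into one kernel-verified Lean document; each statement's English description precedes it below -/
import Mathlib

section
/- Let Q be a complete lattice and ≪ a reflexive relation on Q stronger than ≤ that is transitive and up-expanded (i.e., for every a, the set {x : a ≪ x} is closed under suprema of nonempty subsets). Then for every interval [a,b] in Q, the element r = ⊔{x ∈ [a,b] : a ≪ x} satisfies a ≪ r and there is no y with r < y ≤ b and r ≪ y; i.e., r is a ≪-radical in [a,b]. -/
theorem stmt0 {Q : Type*} [CompleteLattice Q] (rel : Q → Q → Prop)
    (hrefl : ∀ a, rel a a) (hstr : ∀ a b, rel a b → a ≤ b)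
    (htrans : ∀ a b c, rel a b → rel b c → rel a c)
    (hue : ∀ a, ∀ N : Set Q, N.Nonempty → (∀ x ∈ N, rel a x) → rel a (sSup N))
    (a b : Q) (hab : a ≤ b) :
    rel a (sSup {x | x ∈ Set.Icc a b ∧ rel a x}) ∧
    ∀ y, sSup {x | x ∈ Set.Icc a b ∧ rel a x} < y → y ≤ b →
      ¬ rel (sSup {x | x ∈ Set.Icc a b ∧ rel a x}) y := by
  set S : Set Q := {x | x ∈ Set.Icc a b ∧ rel a x}
  have hS : rel a (sSup S) := hue a S ⟨a, ⟨le_rfl, hab⟩, hrefl a⟩ fun x hx => hx.2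
  refine ⟨hS, fun y hlt hyb hy => ?_⟩
  have hyS : y ∈ S := ⟨⟨(hstr _ _ hS).trans hlt.le, hyb⟩, htrans _ _ _ hS hy⟩
  exact hlt.not_ge (le_sSup hyS)
end

section
/- Let Q be a complete lattice and ≪ a T-order on Q (a transitive reflexive relation stronger than ≤ that is up-contiguous and up-expanded). Then every interval [a,b] in Q has a unique ≪-radical, namely r = ⊔{x ∈ [a,b] : a ≪ x}, and moreover [a,r] = [a,b] ∩ {x : x ≪ r}. -/
/-!
The radical of `[a, b]` is the largest `x ∈ [a, b]` with `a ≪ x`: up-expandedness makes the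
supremum of all such `x` again one of them, and transitivity shows that nothing in `(r, b]` is
`≪`-above it. Up-contiguity applied to `a ≪ r` makes every `ρ ∈ [a, r]` satisfy `ρ ≪ r`, which
both rules out any other radical and describes `[a, r]`.
-/

namespace Radical

variable {Q : Type*} [CompleteLattice Q] (rel : Q → Q → Prop)

def IsRadical (a b r : Q) : Prop :=
  r ∈ Set.Icc a b ∧ rel a r ∧ ∀ y, r < y → y ≤ b → ¬ rel r y

def radical (a b : Q) : Q :=
  sSup {x | x ∈ Set.Icc a b ∧ rel a x}

variable {rel} {a b : Q}

theorem le_radical {x : Q} (hx : x ∈ Set.Icc a b) (hax : rel a x) : x ≤ radical rel a b :=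
  le_sSup ⟨hx, hax⟩

theorem radical_le : radical rel a b ≤ b :=
  sSup_le fun _ hx => hx.1.2

theorem rel_radical (hab : a ≤ b) (hrefl : rel a a)
    (hue : ∀ N : Set Q, N.Nonempty → (∀ x ∈ N, rel a x) → rel a (sSup N)) :
    rel a (radical rel a b) :=
  hue _ ⟨a, ⟨le_rfl, hab⟩, hrefl⟩ fun _ hx => hx.2

theorem isRadical_radical (hab : a ≤ b) (hrefl : rel a a)
    (htrans : ∀ x y z, rel x y → rel y z → rel x z)
    (hue : ∀ N : Set Q, N.Nonempty → (∀ x ∈ N, rel a x) → rel a (sSup N)) :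
    IsRadical rel a b (radical rel a b) := by
  have haR : rel a (radical rel a b) := rel_radical hab hrefl hue
  refine ⟨⟨le_radical ⟨le_rfl, hab⟩ hrefl, radical_le⟩, haR, fun y hRy hyb hRy' => ?_⟩
  have hyR : y ≤ radical rel a b :=
    le_radical ⟨(le_radical ⟨le_rfl, hab⟩ hrefl).trans hRy.le, hyb⟩ (htrans _ _ _ haR hRy')
  exact hRy.not_ge hyR

theorem rel_radical_of_mem_Icc (huc : ∀ x y, rel x y → ∀ z, x ≤ z → z ≤ y → rel z y)
    (haR : rel a (radical rel a b)) {x : Q} (hx : x ∈ Set.Icc a (radical rel a b)) :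
    rel x (radical rel a b) :=
  huc _ _ haR x hx.1 hx.2

theorem IsRadical.eq_radical {ρ : Q} (hρ : IsRadical rel a b ρ)
    (huc : ∀ x y, rel x y → ∀ z, x ≤ z → z ≤ y → rel z y)
    (haR : rel a (radical rel a b)) : ρ = radical rel a b := by
  obtain ⟨hρab, haρ, hmax⟩ := hρ
  have hρR : ρ ≤ radical rel a b := le_radical hρab haρ
  refine hρR.eq_or_lt.resolve_right fun hlt => hmax _ hlt radical_le ?_
  exact rel_radical_of_mem_Icc huc haR ⟨hρab.1, hρR⟩

theorem Icc_radical_eq (hle : ∀ x y, rel x y → x ≤ y)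
    (huc : ∀ x y, rel x y → ∀ z, x ≤ z → z ≤ y → rel z y)
    (haR : rel a (radical rel a b)) :
    Set.Icc a (radical rel a b) = Set.Icc a b ∩ {x | rel x (radical rel a b)} := by
  ext x
  constructor
  · intro hx
    exact ⟨⟨hx.1, hx.2.trans radical_le⟩, rel_radical_of_mem_Icc huc haR hx⟩
  · rintro ⟨⟨hax, -⟩, hxR⟩
    exact ⟨hax, hle _ _ hxR⟩

end Radical

open Radical in
theorem stmt1 {Q : Type*} [CompleteLattice Q] (rel : Q → Q → Prop)
    (hrefl : ∀ a, rel a a) (hstr : ∀ a b, rel a b → a ≤ b)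
    (htrans : ∀ a b c, rel a b → rel b c → rel a c)
    (huc : ∀ a b, rel a b → ∀ z, a ≤ z → z ≤ b → rel z b)
    (hue : ∀ a, ∀ N : Set Q, N.Nonempty → (∀ x ∈ N, rel a x) → rel a (sSup N))
    (a b : Q) (hab : a ≤ b) (R : Q)
    (hR : R = sSup {x | x ∈ Set.Icc a b ∧ rel a x}) :
    (R ∈ Set.Icc a b ∧ rel a R ∧ ∀ y, R < y → y ≤ b → ¬ rel R y) ∧
    (∀ ρ, ρ ∈ Set.Icc a b → rel a ρ → (∀ y, ρ < y → y ≤ b → ¬ rel ρ y) → ρ = R) ∧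
    Set.Icc a R = Set.Icc a b ∩ {x | rel x R} := by
  obtain rfl : R = radical rel a b := hR
  have haR : rel a (radical rel a b) := rel_radical hab (hrefl a) (hue a)
  exact ⟨isRadical_radical hab (hrefl a) htrans (hue a),
    fun ρ hρab haρ hmax => IsRadical.eq_radical ⟨hρab, haρ, hmax⟩ huc haR,
    Icc_radical_eq hstr huc haR⟩
end

section
/- Let Q be a complete lattice and ≪ a transitive reflexive relation stronger than ≤ that is up-contiguous. If every interval [a,b] in Q has a unique ≪-radical, then ≪ is up-expanded (i.e., for every a, the set {x : a ≪ x} is closed under suprema of nonempty subsets). -/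
/-!
Let `s = sSup N` and let `r` be the unique radical of `[a, s]`. For `x ∈ N`, the radical `u` of
`[x, s]` is also a radical of `[a, s]`, because `a ≪ x ≪ u`; so `u = r` and `x ≤ u = r`.
Hence `s ≤ r ≤ s`, and `a ≪ r = s`.
-/

def IsIntervalRadical {Q : Type*} [LE Q] (rel : Q → Q → Prop) (a b r : Q) : Prop :=
  rel a r ∧ r ≤ b ∧ ∀ y, r ≤ y → y ≤ b → rel r y → y = r

theorem IsIntervalRadical.of_rel_left {Q : Type*} [LE Q] {rel : Q → Q → Prop}
    (htrans : ∀ a b c, rel a b → rel b c → rel a c) {a x b r : Q}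
    (hr : IsIntervalRadical rel x b r) (hax : rel a x) : IsIntervalRadical rel a b r :=
  ⟨htrans _ _ _ hax hr.1, hr.2⟩

theorem le_of_rel_of_existsUnique_isIntervalRadical {Q : Type*} [Preorder Q] {rel : Q → Q → Prop}
    (hstr : ∀ a b, rel a b → a ≤ b) (htrans : ∀ a b c, rel a b → rel b c → rel a c)
    (hrad : ∀ a b : Q, a ≤ b → ∃! r, IsIntervalRadical rel a b r) {a x b r : Q}
    (hr : IsIntervalRadical rel a b r) (hax : rel a x) (hxb : x ≤ b) : x ≤ r := by
  obtain ⟨u, hu, -⟩ := hrad x b hxb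
  obtain ⟨r', -, huniq⟩ := hrad a b (hstr a r hr.1 |>.trans hr.2.1)
  have hur : u = r := (huniq u (hu.of_rel_left htrans hax)).trans (huniq r hr).symm
  exact hur ▸ hstr x u hu.1

theorem stmt2_general {Q : Type*} [CompleteLattice Q] (rel : Q → Q → Prop)
    (hstr : ∀ a b, rel a b → a ≤ b)
    (htrans : ∀ a b c, rel a b → rel b c → rel a c)
    (hrad : ∀ a b : Q, a ≤ b →
      ∃! ρ, rel a ρ ∧ ρ ≤ b ∧ ∀ y, ρ ≤ y → y ≤ b → rel ρ y → y = ρ) :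
    ∀ a, ∀ N : Set Q, N.Nonempty → (∀ x ∈ N, rel a x) → rel a (sSup N) := by
  intro a N ⟨x₀, hx₀⟩ hN
  obtain ⟨r, hr, -⟩ := hrad a (sSup N) ((hstr a x₀ (hN x₀ hx₀)).trans (le_sSup hx₀))
  have hsr : sSup N ≤ r := sSup_le fun x hx =>
    le_of_rel_of_existsUnique_isIntervalRadical hstr htrans hrad hr (hN x hx) (le_sSup hx)
  exact le_antisymm hr.2.1 hsr ▸ hr.1

theorem stmt2 {Q : Type*} [CompleteLattice Q] (rel : Q → Q → Prop)
    (hrefl : ∀ a, rel a a) (hstr : ∀ a b, rel a b → a ≤ b)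
    (htrans : ∀ a b c, rel a b → rel b c → rel a c)
    (huc : ∀ a b, rel a b → ∀ z, a ≤ z → z ≤ b → rel z b)
    (hrad : ∀ a b : Q, a ≤ b →
      ∃! ρ, rel a ρ ∧ ρ ≤ b ∧ ∀ y, ρ ≤ y → y ≤ b → rel ρ y → y = ρ) :
    ∀ a, ∀ N : Set Q, N.Nonempty → (∀ x ∈ N, rel a x) → rel a (sSup N) :=
  stmt2_general rel hstr htrans hrad
end

section
/- Let ≪ be a dual T-order on a complete lattice Q, and for b ∈ Q let p(b) = ⊓{x : x ≪ b}. Then: p(p(b)) = p(b) for all b; if a ≪ b then p(b) = p(a) and p(a) ≪ a; and if p(b) ≤ a ≤ b then p(b) = p(a) and p(a) ≪ a. -/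
/-!
`p b` is the least element below `b` for `≪`, and it is itself `≪ b` by down-expandedness.
If `a ≪ b`, down-contiguity puts `p b ≪ a`, so `p a ≤ p b`, while transitivity gives `p b ≤ p a`.
Every other claim is a special case of this, via `p b ≪ b` and `p b ≪ a` for `p b ≤ a ≤ b`.
-/

structure IsDualTOrder {Q : Type*} [CompleteLattice Q] (rel : Q → Q → Prop) : Prop where
  refl : ∀ a, rel a a
  le_of_rel : ∀ {a b}, rel a b → a ≤ b
  trans : ∀ {a b c}, rel a b → rel b c → rel a c
  downContiguous : ∀ {a b}, rel a b → ∀ z, a ≤ z → z ≤ b → rel a z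
  downExpanded : ∀ b, ∀ N : Set Q, N.Nonempty → (∀ x ∈ N, rel x b) → rel (sInf N) b

def downInf {Q : Type*} [CompleteLattice Q] (rel : Q → Q → Prop) (b : Q) : Q :=
  sInf {x | rel x b}

section

variable {Q : Type*} [CompleteLattice Q] {rel : Q → Q → Prop} {a b x : Q}

theorem downInf_le (hx : rel x b) : downInf rel b ≤ x :=
  sInf_le hx

namespace IsDualTOrder

variable (h : IsDualTOrder rel)
include h

theorem downInf_rel (b : Q) : rel (downInf rel b) b :=
  h.downExpanded b _ ⟨b, h.refl b⟩ fun _ hx => hx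

theorem downInf_rel_of_le (hba : downInf rel b ≤ a) (hab : a ≤ b) : rel (downInf rel b) a :=
  h.downContiguous (h.downInf_rel b) a hba hab

theorem downInf_le_downInf (hab : rel a b) : downInf rel b ≤ downInf rel a :=
  le_sInf fun _ hx => downInf_le (h.trans hx hab)

theorem downInf_eq_of_rel (hab : rel a b) : downInf rel b = downInf rel a :=
  le_antisymm (h.downInf_le_downInf hab)
    (downInf_le (h.downInf_rel_of_le (downInf_le hab) (h.le_of_rel hab)))

theorem downInf_downInf (b : Q) : downInf rel (downInf rel b) = downInf rel b :=
  (h.downInf_eq_of_rel (h.downInf_rel b)).symm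

theorem downInf_eq_of_le_of_le (hba : downInf rel b ≤ a) (hab : a ≤ b) :
    downInf rel b = downInf rel a := by
  rw [h.downInf_eq_of_rel (h.downInf_rel_of_le hba hab), h.downInf_downInf]

end IsDualTOrder

end

theorem stmt3 {Q : Type*} [CompleteLattice Q] (rel : Q → Q → Prop)
    (hrefl : ∀ a, rel a a) (hstr : ∀ a b, rel a b → a ≤ b)
    (htrans : ∀ a b c, rel a b → rel b c → rel a c)
    (hdc : ∀ a b, rel a b → ∀ z, a ≤ z → z ≤ b → rel a z)
    (hde : ∀ b, ∀ N : Set Q, N.Nonempty → (∀ x ∈ N, rel x b) → rel (sInf N) b)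
    (p : Q → Q) (hp : ∀ b, p b = sInf {x | rel x b}) :
    (∀ b, p (p b) = p b) ∧
    (∀ a b, rel a b → p b = p a ∧ rel (p a) a) ∧
    (∀ a b, p b ≤ a → a ≤ b → p b = p a ∧ rel (p a) a) := by
  have h : IsDualTOrder rel :=
    ⟨hrefl, hstr _ _, htrans _ _ _, hdc _ _, hde⟩
  obtain rfl : p = downInf rel := funext hp
  exact ⟨h.downInf_downInf,
    fun a _ hab => ⟨h.downInf_eq_of_rel hab, h.downInf_rel a⟩,
    fun a _ hba hab => ⟨h.downInf_eq_of_le_of_le hba hab, h.downInf_rel a⟩⟩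
end

section
/- Let Q be a complete lattice. The map g ↦ ≪^g, where x ≪^g y iff x ≤ y and g(x) = g(y), is a bijection from the set of dual pre-radical maps on Q onto the set of contiguous dual T-orders on Q, with inverse ≪ ↦ (b ↦ ⊓{x : x ≪ b}). -/
/-!
A dual pre-radical map `g` is constant on every interval `[g b, b]`, so `x ≪^g b` holds exactly
for `x ∈ [g b, b]`. Conversely, for a contiguous dual T-order `≪`, down-expansion gives `p b ≪ b`
for `p b = ⨅ {x | x ≪ b}`, and contiguity then makes `{x | x ≪ b}` exactly the interval
`[p b, b]`; moreover `p` is constant along `≪`. Both round trips follow from these descriptions.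
-/

/-- A dual pre-radical map on a complete lattice. -/
def DualPreRadical {Q : Type*} [CompleteLattice Q] (g : Q → Q) : Prop :=
  (∀ x, g (g x) = g x) ∧ (∀ x, g x ≤ x) ∧ ∀ x y, g x < y → y < x → g y = g x

/-- A contiguous dual T-order: a reflexive transitive relation stronger than ≤ which is
down-contiguous, up-contiguous and down-expanded. -/
def ContigDualTOrder {Q : Type*} [CompleteLattice Q] (rel : Q → Q → Prop) : Prop :=
  (∀ a, rel a a) ∧ (∀ a b, rel a b → a ≤ b) ∧
  (∀ a b c, rel a b → rel b c → rel a c) ∧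
  (∀ a b, rel a b → ∀ z, a ≤ z → z ≤ b → rel a z) ∧
  (∀ a b, rel a b → ∀ z, a ≤ z → z ≤ b → rel z b) ∧
  (∀ b, ∀ N : Set Q, N.Nonempty → (∀ x ∈ N, rel x b) → rel (sInf N) b)

/-- The relation associated to a map `g`. -/
def relOf {Q : Type*} [CompleteLattice Q] (g : Q → Q) : Q → Q → Prop :=
  fun x y => x ≤ y ∧ g x = g y

/-- The dual radical map associated to a relation. -/
def pOf {Q : Type*} [CompleteLattice Q] (rel : Q → Q → Prop) : Q → Q :=
  fun b => sInf {x | rel x b}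

namespace DualPreRadical

variable {Q : Type*} [CompleteLattice Q] {g : Q → Q} (hg : DualPreRadical g)
include hg

theorem map_eq_of_le_of_le {b z : Q} (h₁ : g b ≤ z) (h₂ : z ≤ b) : g z = g b := by
  obtain ⟨hidem, -, hmid⟩ := hg
  rcases h₂.eq_or_lt with rfl | h₂
  · rfl
  rcases h₁.eq_or_lt with rfl | h₁
  · exact hidem b
  · exact hmid b z h₁ h₂

theorem relOf_of_le_of_le {b z : Q} (h₁ : g b ≤ z) (h₂ : z ≤ b) : relOf g z b :=
  ⟨h₂, hg.map_eq_of_le_of_le h₁ h₂⟩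

theorem map_le_of_relOf {a b : Q} (h : relOf g a b) : g b ≤ a :=
  h.2 ▸ hg.2.1 a

theorem contigDualTOrder_relOf : ContigDualTOrder (relOf g) := by
  refine ⟨fun a => ⟨le_rfl, rfl⟩, fun a b h => h.1,
    fun a b c hab hbc => ⟨hab.1.trans hbc.1, hab.2.trans hbc.2⟩, ?_, ?_, ?_⟩
  · intro a b hab z haz hzb
    have hz := hg.relOf_of_le_of_le ((hg.map_le_of_relOf hab).trans haz) hzb
    exact ⟨haz, hab.2.trans hz.2.symm⟩
  · intro a b hab z haz hzb
    exact hg.relOf_of_le_of_le ((hg.map_le_of_relOf hab).trans haz) hzb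
  · rintro b N ⟨x, hx⟩ hN
    exact hg.relOf_of_le_of_le (le_sInf fun y hy => hg.map_le_of_relOf (hN y hy))
      ((sInf_le hx).trans (hN x hx).1)

theorem pOf_relOf : pOf (relOf g) = g :=
  funext fun b => le_antisymm (sInf_le ⟨hg.2.1 b, hg.1 b⟩)
    (le_sInf fun _ hx => hg.map_le_of_relOf hx)

end DualPreRadical

namespace ContigDualTOrder

variable {Q : Type*} [CompleteLattice Q] {rel : Q → Q → Prop} (hrel : ContigDualTOrder rel)
include hrel

theorem rel_pOf (b : Q) : rel (pOf rel b) b :=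
  hrel.2.2.2.2.2 b _ ⟨b, hrel.1 b⟩ fun _ hx => hx

theorem pOf_le (b : Q) : pOf rel b ≤ b :=
  hrel.2.1 _ _ (hrel.rel_pOf b)

theorem rel_of_pOf_le_of_le {b x : Q} (h₁ : pOf rel b ≤ x) (h₂ : x ≤ b) : rel x b :=
  hrel.2.2.2.2.1 _ _ (hrel.rel_pOf b) x h₁ h₂

theorem pOf_eq_of_rel {x b : Q} (h : rel x b) : pOf rel x = pOf rel b := by
  have hle : x ≤ b := hrel.2.1 x b h
  apply le_antisymm
  · exact sInf_le (hrel.2.2.2.1 _ _ (hrel.rel_pOf b) x (sInf_le h) hle)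
  · exact le_sInf fun z hz => sInf_le (hrel.2.2.1 z x b hz h)

theorem dualPreRadical_pOf : DualPreRadical (pOf rel) :=
  ⟨fun b => hrel.pOf_eq_of_rel (hrel.rel_pOf b), hrel.pOf_le,
    fun _ _ h₁ h₂ => hrel.pOf_eq_of_rel (hrel.rel_of_pOf_le_of_le h₁.le h₂.le)⟩

theorem relOf_pOf : relOf (pOf rel) = rel := by
  funext x b
  refine propext ⟨fun ⟨hxb, hp⟩ => hrel.rel_of_pOf_le_of_le (hp ▸ hrel.pOf_le x) hxb,
    fun h => ⟨hrel.2.1 x b h, hrel.pOf_eq_of_rel h⟩⟩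

end ContigDualTOrder

theorem stmt4 {Q : Type*} [CompleteLattice Q] :
    (∀ g : Q → Q, DualPreRadical g → ContigDualTOrder (relOf g) ∧ pOf (relOf g) = g) ∧
    (∀ rel : Q → Q → Prop, ContigDualTOrder rel →
      DualPreRadical (pOf rel) ∧ relOf (pOf rel) = rel) :=
  ⟨fun _ hg => ⟨hg.contigDualTOrder_relOf, hg.pOf_relOf⟩,
    fun _ hrel => ⟨hrel.dualPreRadical_pOf, hrel.relOf_pOf⟩⟩
end

section
/- For a relation ≪ on a complete lattice Q, the following are equivalent: (1) ≪ is up-contiguous and a ∧ b ≪ b implies a ≪ a ∨ b; (2) a ≪ b and a ≤ c imply c ≪ b ∨ c; (3) a ≪ b implies a ∨ x ≪ b ∨ x for every x ∈ Q. -/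
/-!
All three conditions are instances of one move: enlarge the left argument of `a ≪ b` to some
`c ≥ a` and the right one to `b ⊔ c`. Condition (2) allows every such move; up-contiguity is the
case `c ≤ b`, the meet condition the case `a = c ⊓ b`, and (3) the case `c = a ⊔ x`. Conversely
a general move `a ≤ c` factors as `a ≪ b ⟹ c ⊓ b ≪ b ⟹ c ≪ c ⊔ b`, or as
`a ≪ b ⟹ a ⊔ c ≪ b ⊔ c` with `a ⊔ c = c`.
-/

def UpContiguous {α : Type*} [Preorder α] (r : α → α → Prop) : Prop :=
  ∀ a b, r a b → ∀ z, a ≤ z → z ≤ b → r z b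

section Lattice

variable {α : Type*} [Lattice α] {r : α → α → Prop}

theorem rel_sup_of_upContiguous (hle : ∀ a b, r a b → a ≤ b) (hup : UpContiguous r)
    (hinf : ∀ a b, r (a ⊓ b) b → r a (a ⊔ b)) {a b c : α} (hab : r a b) (hac : a ≤ c) :
    r c (b ⊔ c) := by
  have hcb : r (c ⊓ b) b := hup a b hab (c ⊓ b) (le_inf hac (hle a b hab)) inf_le_right
  simpa only [sup_comm] using hinf c b hcb

theorem upContiguous_of_rel_sup (hsup : ∀ a b c, r a b → a ≤ c → r c (b ⊔ c)) :
    UpContiguous r := fun a b hab z haz hzb => by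
  simpa only [sup_eq_left.mpr hzb] using hsup a b z hab haz

theorem rel_sup_of_rel_inf_of_rel_sup (hsup : ∀ a b c, r a b → a ≤ c → r c (b ⊔ c))
    {a b : α} (hab : r (a ⊓ b) b) : r a (a ⊔ b) := by
  simpa only [sup_comm] using hsup (a ⊓ b) b a hab inf_le_left

theorem rel_sup_sup_of_rel_sup (hsup : ∀ a b c, r a b → a ≤ c → r c (b ⊔ c))
    (hle : ∀ a b, r a b → a ≤ b) {a b : α} (x : α) (hab : r a b) : r (a ⊔ x) (b ⊔ x) := by
  have hb : b ⊔ (a ⊔ x) = b ⊔ x := by rw [← sup_assoc, sup_eq_left.mpr (hle a b hab)]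
  simpa only [hb] using hsup a b (a ⊔ x) hab le_sup_left

theorem rel_sup_of_rel_sup_sup (hsup : ∀ a b x, r a b → r (a ⊔ x) (b ⊔ x)) {a b c : α}
    (hab : r a b) (hac : a ≤ c) : r c (b ⊔ c) := by
  simpa only [sup_eq_right.mpr hac] using hsup a b c hab

end Lattice

theorem stmt5_general {Q : Type*} [CompleteLattice Q] (rel : Q → Q → Prop)
    (hstr : ∀ a b, rel a b → a ≤ b) :
    (((∀ a b, rel a b → ∀ z, a ≤ z → z ≤ b → rel z b) ∧
        (∀ a b, rel (a ⊓ b) b → rel a (a ⊔ b))) ↔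
      (∀ a b c, rel a b → a ≤ c → rel c (b ⊔ c))) ∧
    ((∀ a b c, rel a b → a ≤ c → rel c (b ⊔ c)) ↔
      (∀ a b x, rel a b → rel (a ⊔ x) (b ⊔ x))) :=
  ⟨⟨fun ⟨hup, hinf⟩ _ _ _ => rel_sup_of_upContiguous hstr hup hinf,
      fun hsup => ⟨upContiguous_of_rel_sup hsup, fun _ _ => rel_sup_of_rel_inf_of_rel_sup hsup⟩⟩,
    ⟨fun hsup _ _ x => rel_sup_sup_of_rel_sup hsup hstr x,
      fun hsup _ _ _ => rel_sup_of_rel_sup_sup hsup⟩⟩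

theorem stmt5 {Q : Type*} [CompleteLattice Q] (rel : Q → Q → Prop)
    (hrefl : ∀ a, rel a a) (hstr : ∀ a b, rel a b → a ≤ b) :
    (((∀ a b, rel a b → ∀ z, a ≤ z → z ≤ b → rel z b) ∧
        (∀ a b, rel (a ⊓ b) b → rel a (a ⊔ b))) ↔
      (∀ a b c, rel a b → a ≤ c → rel c (b ⊔ c))) ∧
    ((∀ a b c, rel a b → a ≤ c → rel c (b ⊔ c)) ↔
      (∀ a b x, rel a b → rel (a ⊔ x) (b ⊔ x))) :=
  stmt5_general rel hstr
end

section
/- Let ≪ be a dual R-order on a complete lattice Q and p(b) = ⊓{x : x ≪ b}. Then for all a, b ∈ Q: p(a ∧ b) ≪ p(a) ∧ p(b), p(a) ∧ p(b) ≪ a ∧ b, and a ≤ b implies p(a) ≤ p(b). -/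
/-!
Write `p b` for the infimum of `{x | rel x b}`. Down-expandedness gives `p b ≪ b`, and `p b` is
the least such element. Meeting `p a ≪ a` and `p b ≪ b` with suitable elements and chaining gives
`p a ⊓ p b ≪ a ⊓ b`, so `p (a ⊓ b) ≤ p a ⊓ p b`; meeting `p (a ⊓ b) ≪ a ⊓ b` with `p a ⊓ p b`
then shrinks its right-hand side to `p a ⊓ p b`.
-/

section DualROrder

variable {Q : Type*} [CompleteLattice Q] {rel : Q → Q → Prop}

def sInfRel (rel : Q → Q → Prop) (b : Q) : Q := sInf {x | rel x b}

theorem sInfRel_le {x b : Q} (h : rel x b) : sInfRel rel b ≤ x :=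
  sInf_le h

theorem sInfRel_le_self (hrefl : ∀ a, rel a a) (b : Q) : sInfRel rel b ≤ b :=
  sInfRel_le (hrefl b)

theorem rel_sInfRel (hrefl : ∀ a, rel a a)
    (hde : ∀ b, ∀ N : Set Q, N.Nonempty → (∀ x ∈ N, rel x b) → rel (sInf N) b) (b : Q) :
    rel (sInfRel rel b) b :=
  hde b _ ⟨b, hrefl b⟩ fun _ hx => hx

theorem sInfRel_mono (hdH : ∀ a b x, rel a b → rel (a ⊓ x) (b ⊓ x)) {a b : Q} (hab : a ≤ b) :
    sInfRel rel a ≤ sInfRel rel b := by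
  refine le_sInf fun y (hy : rel y b) => ?_
  have hya : rel (y ⊓ a) a := by simpa only [inf_eq_right.mpr hab] using hdH _ _ a hy
  exact (sInfRel_le hya).trans inf_le_left

theorem rel_inf_inf (htrans : ∀ a b c, rel a b → rel b c → rel a c)
    (hdH : ∀ a b x, rel a b → rel (a ⊓ x) (b ⊓ x)) {a a' b b' : Q}
    (ha : rel a a') (hb : rel b b') : rel (a ⊓ b) (a' ⊓ b') := by
  have hb' : rel (a' ⊓ b) (a' ⊓ b') := by
    simpa only [inf_comm] using hdH _ _ a' hb
  exact htrans _ _ _ (hdH _ _ b ha) hb'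

theorem rel_of_rel_of_le_of_le (hdH : ∀ a b x, rel a b → rel (a ⊓ x) (b ⊓ x)) {x y z : Q}
    (hxz : rel x z) (hxy : x ≤ y) (hyz : y ≤ z) : rel x y := by
  simpa only [inf_eq_left.mpr hxy, inf_eq_right.mpr hyz] using hdH _ _ y hxz

end DualROrder

theorem stmt7_general {Q : Type*} [CompleteLattice Q] (rel : Q → Q → Prop)
    (hrefl : ∀ a, rel a a)
    (htrans : ∀ a b c, rel a b → rel b c → rel a c)
    (hdH : ∀ a b x, rel a b → rel (a ⊓ x) (b ⊓ x))
    (hde : ∀ b, ∀ N : Set Q, N.Nonempty → (∀ x ∈ N, rel x b) → rel (sInf N) b)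
    (p : Q → Q) (hp : ∀ b, p b = sInf {x | rel x b}) :
    ∀ a b : Q, rel (p (a ⊓ b)) (p a ⊓ p b) ∧ rel (p a ⊓ p b) (a ⊓ b) ∧
      (a ≤ b → p a ≤ p b) := by
  obtain rfl : p = sInfRel rel := funext hp
  intro a b
  have hmeet : rel (sInfRel rel a ⊓ sInfRel rel b) (a ⊓ b) :=
    rel_inf_inf htrans hdH (rel_sInfRel hrefl hde a) (rel_sInfRel hrefl hde b)
  refine ⟨?_, hmeet, sInfRel_mono hdH⟩
  exact rel_of_rel_of_le_of_le hdH (rel_sInfRel hrefl hde (a ⊓ b)) (sInfRel_le hmeet)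
    (inf_le_inf (sInfRel_le_self hrefl a) (sInfRel_le_self hrefl b))

theorem stmt7 {Q : Type*} [CompleteLattice Q] (rel : Q → Q → Prop)
    (hrefl : ∀ a, rel a a) (hstr : ∀ a b, rel a b → a ≤ b)
    (htrans : ∀ a b c, rel a b → rel b c → rel a c)
    (hdH : ∀ a b x, rel a b → rel (a ⊓ x) (b ⊓ x))
    (hde : ∀ b, ∀ N : Set Q, N.Nonempty → (∀ x ∈ N, rel x b) → rel (sInf N) b)
    (p : Q → Q) (hp : ∀ b, p b = sInf {x | rel x b}) :
    ∀ a b : Q, rel (p (a ⊓ b)) (p a ⊓ p b) ∧ rel (p a ⊓ p b) (a ⊓ b) ∧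
      (a ≤ b → p a ≤ p b) :=
  stmt7_general rel hrefl htrans hdH hde p hp
end

section
/- Let ≪ be an H-relation that is also a dual R-order on a complete lattice Q, and p(b) = ⊓{x : x ≪ b}. Then p(a ∨ b) = p(a) ∨ p(b) for all a, b ∈ Q. -/
/-!
Since `p a ≪ a` and `p b ≪ b`, joining with `p b` and with `a`
and chaining gives `p a ⊔ p b ≪ a ⊔ b`, so `p (a ⊔ b) ≤ p a ⊔ p b`. Conversely `p` is monotone:
if `c ≤ d` and `x ≪ d`, meeting with `c` gives `x ⊓ c ≪ c`, so `p c ≤ x ⊓ c ≤ x`.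
-/

section

variable {Q : Type*} [CompleteLattice Q] {r : Q → Q → Prop}

theorem rel_sup_sup (hH : ∀ a b x, r a b → r (a ⊔ x) (b ⊔ x))
    (htrans : ∀ a b c, r a b → r b c → r a c) {a b c d : Q} (hab : r a b) (hcd : r c d) :
    r (a ⊔ c) (b ⊔ d) := by
  have hcd' : r (b ⊔ c) (b ⊔ d) := by
    rw [sup_comm b c, sup_comm b d]
    exact hH c d b hcd
  exact htrans _ _ _ (hH a b c hab) hcd'

theorem rel_sInf_setOf_rel (hrefl : ∀ a, r a a)
    (hde : ∀ b, ∀ N : Set Q, N.Nonempty → (∀ x ∈ N, r x b) → r (sInf N) b) (b : Q) :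
    r (sInf {x | r x b}) b :=
  hde b _ ⟨b, hrefl b⟩ fun _ hx => hx

theorem monotone_sInf_setOf_rel (hdH : ∀ a b x, r a b → r (a ⊓ x) (b ⊓ x)) :
    Monotone fun b => sInf {x | r x b} := by
  intro c d hcd
  refine le_sInf fun x hx => ?_
  have hxc : r (x ⊓ c) c := by simpa only [inf_eq_right.mpr hcd] using hdH x d c hx
  exact (sInf_le (show x ⊓ c ∈ {y | r y c} from hxc)).trans inf_le_left

end

theorem stmt8_general {Q : Type*} [CompleteLattice Q] (rel : Q → Q → Prop)
    (hrefl : ∀ a, rel a a)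
    (htrans : ∀ a b c, rel a b → rel b c → rel a c)
    (hH : ∀ a b x, rel a b → rel (a ⊔ x) (b ⊔ x))
    (hdH : ∀ a b x, rel a b → rel (a ⊓ x) (b ⊓ x))
    (hde : ∀ b, ∀ N : Set Q, N.Nonempty → (∀ x ∈ N, rel x b) → rel (sInf N) b)
    (p : Q → Q) (hp : ∀ b, p b = sInf {x | rel x b}) :
    ∀ a b : Q, p (a ⊔ b) = p a ⊔ p b := by
  obtain rfl : p = fun b => sInf {x | rel x b} := funext hp
  intro a b
  have hp_rel := rel_sInf_setOf_rel hrefl hde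
  have hp_mono := monotone_sInf_setOf_rel hdH
  exact le_antisymm (sInf_le (rel_sup_sup hH htrans (hp_rel a) (hp_rel b)))
    (sup_le (hp_mono le_sup_left) (hp_mono le_sup_right))

theorem stmt8 {Q : Type*} [CompleteLattice Q] (rel : Q → Q → Prop)
    (hrefl : ∀ a, rel a a) (hstr : ∀ a b, rel a b → a ≤ b)
    (htrans : ∀ a b c, rel a b → rel b c → rel a c)
    (hH : ∀ a b x, rel a b → rel (a ⊔ x) (b ⊔ x))
    (hdH : ∀ a b x, rel a b → rel (a ⊓ x) (b ⊓ x))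
    (hde : ∀ b, ∀ N : Set Q, N.Nonempty → (∀ x ∈ N, rel x b) → rel (sInf N) b)
    (p : Q → Q) (hp : ∀ b, p b = sInf {x | rel x b}) :
    ∀ a b : Q, p (a ⊔ b) = p a ⊔ p b :=
  stmt8_general rel hrefl htrans hH hdH hde p hp
end

section
/- Let Q be a complete lattice, G a ∧-complete subset of Q (closed under infima of nonempty subsets), C a chain in G with b := ⊔C ∈ G, and a = ⊓C. If C is a maximal chain in G ∩ [a,b], then C is closed under infima of nonempty subsets; if moreover G is also closed under suprema of nonempty subsets, then C is complete (closed under both infima and suprema). -/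
/-!
The infimum (supremum) of a nonempty subset of the chain `C` lies in `G ∩ [⊓C, ⊔C]` and is
comparable with every element of `C`, so adding it to `C` still gives a chain in `G ∩ [⊓C, ⊔C]`;
maximality of `C` forces it to belong to `C` already.
-/

theorem IsChain.mem_of_maximal {α : Type*} {r : α → α → Prop} {C S : Set α}
    (hC : IsChain r C) (hCS : C ⊆ S)
    (hmax : ∀ D : Set α, IsChain r D → C ⊆ D → D ⊆ S → D = C)
    {m : α} (hmS : m ∈ S) (hm : ∀ c ∈ C, r m c ∨ r c m) : m ∈ C := by
  have hinsert : insert m C = C :=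
    hmax _ (hC.insert fun c hc _ => hm c hc) (Set.subset_insert m C)
      (Set.insert_subset hmS hCS)
  exact hinsert ▸ Set.mem_insert m C

section CompleteLattice

variable {Q : Type*} [CompleteLattice Q] {C N : Set Q}

theorem IsChain.le_sInf_or_sInf_le (hC : IsChain (· ≤ ·) C) (hN : N ⊆ C) {c : Q}
    (hc : c ∈ C) : c ≤ sInf N ∨ sInf N ≤ c := by
  by_cases h : ∀ x ∈ N, c ≤ x
  · exact Or.inl (le_sInf h)
  · obtain ⟨x, hxN, hcx⟩ := not_forall₂.mp h
    exact Or.inr ((sInf_le hxN).trans ((hC.total (hN hxN) hc).resolve_right hcx))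

theorem IsChain.sSup_le_or_le_sSup (hC : IsChain (· ≤ ·) C) (hN : N ⊆ C) {c : Q}
    (hc : c ∈ C) : sSup N ≤ c ∨ c ≤ sSup N := by
  by_cases h : ∀ x ∈ N, x ≤ c
  · exact Or.inl (sSup_le h)
  · obtain ⟨x, hxN, hxc⟩ := not_forall₂.mp h
    exact Or.inr (((hC.total hc (hN hxN)).resolve_right hxc).trans (le_sSup hxN))

end CompleteLattice

theorem stmt9_general {Q : Type*} [CompleteLattice Q] (G C : Set Q)
    (hG : ∀ N : Set Q, N ⊆ G → N.Nonempty → sInf N ∈ G)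
    (hCchain : IsChain (· ≤ ·) C) (hCG : C ⊆ G)
    (hmax : ∀ D : Set Q, IsChain (· ≤ ·) D → C ⊆ D →
      D ⊆ G ∩ Set.Icc (sInf C) (sSup C) → D = C) :
    (∀ N : Set Q, N ⊆ C → N.Nonempty → sInf N ∈ C) ∧
    ((∀ N : Set Q, N ⊆ G → N.Nonempty → sSup N ∈ G) →
      ∀ N : Set Q, N ⊆ C → N.Nonempty → sSup N ∈ C) := by
  have hCS : C ⊆ G ∩ Set.Icc (sInf C) (sSup C) := fun c hc =>
    ⟨hCG hc, sInf_le hc, le_sSup hc⟩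
  refine ⟨fun N hN ⟨n, hn⟩ => ?_, fun hGsup N hN ⟨n, hn⟩ => ?_⟩
  · exact hCchain.mem_of_maximal hCS hmax
      ⟨hG N (hN.trans hCG) ⟨n, hn⟩, sInf_le_sInf hN, (sInf_le hn).trans (le_sSup (hN hn))⟩
      fun c hc => (hCchain.le_sInf_or_sInf_le hN hc).symm
  · exact hCchain.mem_of_maximal hCS hmax
      ⟨hGsup N (hN.trans hCG) ⟨n, hn⟩, (sInf_le (hN hn)).trans (le_sSup hn), sSup_le_sSup hN⟩
      fun c hc => hCchain.sSup_le_or_le_sSup hN hc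

theorem stmt9 {Q : Type*} [CompleteLattice Q] (G C : Set Q)
    (hG : ∀ N : Set Q, N ⊆ G → N.Nonempty → sInf N ∈ G)
    (hCchain : IsChain (· ≤ ·) C) (hCG : C ⊆ G) (hb : sSup C ∈ G)
    (hmax : ∀ D : Set Q, IsChain (· ≤ ·) D → C ⊆ D →
      D ⊆ G ∩ Set.Icc (sInf C) (sSup C) → D = C) :
    (∀ N : Set Q, N ⊆ C → N.Nonempty → sInf N ∈ C) ∧
    ((∀ N : Set Q, N ⊆ G → N.Nonempty → sSup N ∈ G) →
      ∀ N : Set Q, N ⊆ C → N.Nonempty → sSup N ∈ C) :=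
  stmt9_general G C hG hCchain hCG hmax
end

section
/- Let Q be a complete lattice, ≪ a reflexive relation stronger than ≤, and C ⊆ Q a ∧-complete lower ≪-gap chain with ⊔C ∈ C. Then C is also ∨-complete (hence complete). -/
/-!
Let `s = ⊔N` and let `m` be the least element of `C` above `s`, which exists by ∧-completeness
since `⊔C ∈ C`. If `s < m`, then `m ≠ ⊓C`, so `m` has an immediate predecessor `p` in `C`.
Every element of `N` lies strictly below `m`, hence, `C` being a chain with no element strictly
between `p` and `m`, below `p`. Thus `s ≤ p < m`, contradicting the minimality of `m`.
-/

theorem sSup_le_of_Icc_inter_subset {Q : Type*} [CompleteLattice Q] {C N : Set Q}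
    (hC : IsChain (· ≤ ·) C) {p x : Q} (hp : p ∈ C) (hgap : Set.Icc p x ∩ C ⊆ {p, x})
    (hN : N ⊆ C) (hNx : sSup N < x) : sSup N ≤ p := by
  refine sSup_le fun n hn => ?_
  rcases hC.total (hN hn) hp with hnp | hpn
  · exact hnp
  · have hnx : n < x := (le_sSup hn).trans_lt hNx
    rcases hgap ⟨⟨hpn, hnx.le⟩, hN hn⟩ with rfl | rfl
    · exact le_rfl
    · exact absurd hnx (lt_irrefl n)

theorem stmt10_general {Q : Type*} [CompleteLattice Q] (rel : Q → Q → Prop)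
    (hstr : ∀ a b, rel a b → a ≤ b)
    (C : Set Q) (hchain : IsChain (· ≤ ·) C)
    (hinf : ∀ N : Set Q, N ⊆ C → N.Nonempty → sInf N ∈ C)
    (hgap : ∀ x ∈ C, x ≠ sInf C →
      ∃ p ∈ C, p ≠ x ∧ rel p x ∧ Set.Icc p x ∩ C = {p, x})
    (htop : sSup C ∈ C) :
    ∀ N : Set Q, N ⊆ C → N.Nonempty → sSup N ∈ C := by
  intro N hNC ⟨n, hn⟩
  set D := {x ∈ C | sSup N ≤ x}
  have hmC : sInf D ∈ C := hinf D (fun x hx => hx.1) ⟨sSup C, htop, sSup_le_sSup hNC⟩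
  have hsm : sSup N ≤ sInf D := le_sInf fun x hx => hx.2
  rcases hsm.eq_or_lt with heq | hlt
  · exact heq ▸ hmC
  have hne : sInf D ≠ sInf C := ((sInf_le (hNC hn)).trans (le_sSup hn)).trans_lt hlt |>.ne'
  obtain ⟨p, hpC, hpm, hrel, hIcc⟩ := hgap _ hmC hne
  have hsp : sSup N ≤ p := sSup_le_of_Icc_inter_subset hchain hpC hIcc.subset hNC hlt
  exact absurd (le_antisymm (hstr _ _ hrel) (sInf_le ⟨hpC, hsp⟩)) hpm

theorem stmt10 {Q : Type*} [CompleteLattice Q] (rel : Q → Q → Prop)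
    (hrefl : ∀ a, rel a a) (hstr : ∀ a b, rel a b → a ≤ b)
    (C : Set Q) (hchain : IsChain (· ≤ ·) C)
    (hinf : ∀ N : Set Q, N ⊆ C → N.Nonempty → sInf N ∈ C)
    (hgap : ∀ x ∈ C, x ≠ sInf C →
      ∃ p ∈ C, p ≠ x ∧ rel p x ∧ Set.Icc p x ∩ C = {p, x})
    (htop : sSup C ∈ C) :
    ∀ N : Set Q, N ⊆ C → N.Nonempty → sSup N ∈ C :=
  stmt10_general rel hstr C hchain hinf hgap htop
end

section
/- Let Q be a complete lattice and ≪ a reflexive relation stronger than ≤. Define a ≪^◁ b iff a = b or there exists a complete lower ≪-gap chain from a to b. Then ≪^◁ is transitive and (≪^◁)^◁ = ≪^◁. -/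
/-- `C` is a complete lower `rel`-gap chain from `a` to `b`. -/
def IsCompleteLowerGapChain {Q : Type*} [CompleteLattice Q]
    (rel : Q → Q → Prop) (a b : Q) (C : Set Q) : Prop :=
  IsChain (· ≤ ·) C ∧ a ∈ C ∧ b ∈ C ∧ sInf C = a ∧ sSup C = b ∧
  (∀ N : Set Q, N ⊆ C → N.Nonempty → sInf N ∈ C) ∧
  (∀ N : Set Q, N ⊆ C → N.Nonempty → sSup N ∈ C) ∧
  ∀ x ∈ C, x ≠ a → ∃ p ∈ C, p ≠ x ∧ rel p x ∧ Set.Icc p x ∩ C = {p, x}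

/-- The relation `≪^◁` constructed from `rel`. -/
def relTri {Q : Type*} [CompleteLattice Q] (rel : Q → Q → Prop) : Q → Q → Prop :=
  fun a b => a = b ∨ ∃ C : Set Q, IsCompleteLowerGapChain rel a b C

/-!
Filling every gap `[p, x]` of a complete lower gap chain from `a` to `b` with a complete lower
`≪`-gap chain from `p` to `x` gives a complete lower `≪`-gap chain from `a` to `b`. The new points
of one gap are comparable with everything, and an infimum or supremum that does not lie in the old
chain `C` lies in a single gap `[p, x]` (with `x` the least element of `C` above it), so it is the
infimum or supremum of the points filling that gap. For a `≪^◁`-gap chain this is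
`(≪^◁)^◁ ⊆ ≪^◁`; transitivity is the case of the three-point chain `a < b < c`, and the reverse
inclusion uses two-point chains.
-/

open Set

section OrderLemmas

variable {α : Type*}

theorem IsChain.le_or_le_of_Icc_inter_eq_pair [Preorder α] {C : Set α} {p x z : α}
    (hC : IsChain (· ≤ ·) C) (hgap : Icc p x ∩ C = {p, x}) (hz : z ∈ C) : z ≤ p ∨ x ≤ z := by
  have hp : p ∈ Icc p x ∩ C := hgap ▸ mem_insert p {x}
  have hx : x ∈ Icc p x ∩ C := hgap ▸ mem_insert_of_mem p rfl
  rcases hC.total hz hp.2 with hzp | hpz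
  · exact Or.inl hzp
  rcases hC.total hz hx.2 with hzx | hxz
  · have hz' : z ∈ Icc p x ∩ C := ⟨⟨hpz, hzx⟩, hz⟩
    rw [hgap] at hz'
    rcases hz' with rfl | rfl
    · exact Or.inl le_rfl
    · exact Or.inr le_rfl
  · exact Or.inr hxz

variable [CompleteLattice α] {N S : Set α} {y : α}

theorem IsChain.sInf_mem_of_finite (hS : IsChain (· ≤ ·) S) (hfin : S.Finite)
    (hne : S.Nonempty) : sInf S ∈ S := by
  obtain ⟨m, hm⟩ := hfin.exists_minimal hne
  have hleast : IsLeast S m :=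
    ⟨hm.prop, fun z hz => (hS.total hm.prop hz).elim id (hm.le_of_le hz)⟩
  exact hleast.isGLB.sInf_eq ▸ hm.prop

theorem IsChain.sSup_mem_of_finite (hS : IsChain (· ≤ ·) S) (hfin : S.Finite)
    (hne : S.Nonempty) : sSup S ∈ S := by
  obtain ⟨m, hm⟩ := hfin.exists_maximal hne
  have hgreatest : IsGreatest S m :=
    ⟨hm.prop, fun z hz => (hS.total hz hm.prop).elim id (hm.le_of_ge hz)⟩
  exact hgreatest.isLUB.sSup_eq ▸ hm.prop

theorem sInf_le_or_le_sInf (h : ∀ n ∈ N, n ≤ y ∨ y ≤ n) : sInf N ≤ y ∨ y ≤ sInf N := by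
  by_cases hy : ∀ n ∈ N, y ≤ n
  · exact Or.inr (le_sInf hy)
  · push Not at hy
    obtain ⟨n, hn, hyn⟩ := hy
    exact Or.inl ((sInf_le hn).trans ((h n hn).resolve_right hyn))

theorem sSup_le_or_le_sSup (h : ∀ n ∈ N, n ≤ y ∨ y ≤ n) : sSup N ≤ y ∨ y ≤ sSup N := by
  by_cases hy : ∀ n ∈ N, n ≤ y
  · exact Or.inl (sSup_le hy)
  · push Not at hy
    obtain ⟨n, hn, hny⟩ := hy
    exact Or.inr (((h n hn).resolve_left hny).trans (le_sSup hn))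

theorem sInf_inter_eq_sInf (h : ∀ n ∈ N, n ∉ S → sInf (N ∩ S) ≤ n) :
    sInf (N ∩ S) = sInf N :=
  le_antisymm
    (le_sInf fun n hn => by by_cases hnS : n ∈ S; exacts [sInf_le ⟨hn, hnS⟩, h n hn hnS])
    (sInf_le_sInf inter_subset_left)

theorem sSup_inter_eq_sSup (h : ∀ n ∈ N, n ∉ S → n ≤ sSup (N ∩ S)) :
    sSup (N ∩ S) = sSup N :=
  le_antisymm (sSup_le_sSup inter_subset_left)
    (sSup_le fun n hn => by by_cases hnS : n ∈ S; exacts [le_sSup ⟨hn, hnS⟩, h n hn hnS])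

end OrderLemmas

def fillGaps {α : Type*} (a : α) (C : Set α) (D : α → Set α) : Set α :=
  C ∪ {e | ∃ x ∈ C, x ≠ a ∧ e ∈ D x}

theorem subset_fillGaps {α : Type*} {a x : α} {C : Set α} {D : α → Set α} (hx : x ∈ C)
    (hxa : x ≠ a) : D x ⊆ fillGaps a C D :=
  fun _ hz => Or.inr ⟨x, hx, hxa, hz⟩

section GapChains

variable {Q : Type*} [CompleteLattice Q] {rel R : Q → Q → Prop} {a b c : Q} {C S : Set Q}

namespace IsCompleteLowerGapChain

theorem isChain (h : IsCompleteLowerGapChain rel a b C) : IsChain (· ≤ ·) C := h.1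

theorem left_mem (h : IsCompleteLowerGapChain rel a b C) : a ∈ C := h.2.1

theorem right_mem (h : IsCompleteLowerGapChain rel a b C) : b ∈ C := h.2.2.1

theorem sInf_mem (h : IsCompleteLowerGapChain rel a b C) {N : Set Q} (hN : N ⊆ C)
    (hne : N.Nonempty) : sInf N ∈ C :=
  h.2.2.2.2.2.1 N hN hne

theorem sSup_mem (h : IsCompleteLowerGapChain rel a b C) {N : Set Q} (hN : N ⊆ C)
    (hne : N.Nonempty) : sSup N ∈ C :=
  h.2.2.2.2.2.2.1 N hN hne

theorem exists_pred (h : IsCompleteLowerGapChain rel a b C) {x : Q} (hx : x ∈ C) (hxa : x ≠ a) :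
    ∃ p ∈ C, p ≠ x ∧ rel p x ∧ Icc p x ∩ C = {p, x} :=
  h.2.2.2.2.2.2.2 x hx hxa

theorem mem_Icc (h : IsCompleteLowerGapChain rel a b C) {z : Q} (hz : z ∈ C) : z ∈ Icc a b :=
  ⟨h.2.2.2.1 ▸ sInf_le hz, h.2.2.2.2.1 ▸ le_sSup hz⟩

theorem le (h : IsCompleteLowerGapChain rel a b C) : a ≤ b := (h.mem_Icc h.left_mem).2

theorem of_finite (hS : IsChain (· ≤ ·) S) (hfin : S.Finite) (ha : IsLeast S a)
    (hb : IsGreatest S b)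
    (hgap : ∀ x ∈ S, x ≠ a → ∃ p ∈ S, p ≠ x ∧ rel p x ∧ Icc p x ∩ S = {p, x}) :
    IsCompleteLowerGapChain rel a b S :=
  ⟨hS, ha.1, hb.1, ha.isGLB.sInf_eq, hb.isLUB.sSup_eq,
    fun _ hN hne => hN ((hS.mono hN).sInf_mem_of_finite (hfin.subset hN) hne),
    fun _ hN hne => hN ((hS.mono hN).sSup_mem_of_finite (hfin.subset hN) hne), hgap⟩

theorem pair (hab : a ≤ b) (hne : a ≠ b) (hr : rel a b) :
    IsCompleteLowerGapChain rel a b {a, b} := by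
  refine of_finite (IsChain.pair hab) (toFinite _) ⟨by simp, by simp [hab]⟩
    ⟨by simp, by simp [hab]⟩ ?_
  rintro x (rfl | rfl) hxa
  · exact absurd rfl hxa
  · exact ⟨a, by simp, hne, hr, inter_eq_right.2 (pair_subset ⟨le_rfl, hab⟩ ⟨hab, le_rfl⟩)⟩

theorem triple (hab : a ≤ b) (hbc : b ≤ c) (hne₁ : a ≠ b) (hne₂ : b ≠ c) (h₁ : rel a b)
    (h₂ : rel b c) : IsCompleteLowerGapChain rel a c {a, b, c} := by
  have hchain : IsChain (· ≤ ·) {a, b, c} := (IsChain.pair hbc).insert <| by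
    rintro _ (rfl | rfl) _ <;> simp [hab, hab.trans hbc]
  refine of_finite hchain (toFinite _) ⟨by simp, by simp [hab, hab.trans hbc]⟩
    ⟨by simp, by simp [hbc, hab.trans hbc]⟩ ?_
  rintro x (rfl | rfl | rfl) hxa
  · exact absurd rfl hxa
  · refine ⟨a, by simp, hne₁, h₁, ?_⟩
    ext y
    simp only [mem_inter_iff, Set.mem_Icc, mem_insert_iff, mem_singleton_iff]
    grind [le_antisymm]
  · refine ⟨b, by simp, hne₂, h₂, ?_⟩
    ext y
    simp only [mem_inter_iff, Set.mem_Icc, mem_insert_iff, mem_singleton_iff]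
    grind [le_antisymm]

end IsCompleteLowerGapChain

def IsGapFilling (rel : Q → Q → Prop) (a : Q) (C : Set Q) (p : Q → Q) (D : Q → Set Q) : Prop :=
  ∀ x ∈ C, x ≠ a → p x ≠ x ∧ Icc (p x) x ∩ C = {p x, x} ∧ IsCompleteLowerGapChain rel (p x) x (D x)

namespace IsGapFilling

variable {p : Q → Q} {D : Q → Set Q} {x e m : Q}

theorem pred_ne (hD : IsGapFilling rel a C p D) (hx : x ∈ C) (hxa : x ≠ a) : p x ≠ x :=
  (hD x hx hxa).1

theorem chain (hD : IsGapFilling rel a C p D) (hx : x ∈ C) (hxa : x ≠ a) :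
    IsCompleteLowerGapChain rel (p x) x (D x) :=
  (hD x hx hxa).2.2

theorem pred_mem (hD : IsGapFilling rel a C p D) (hx : x ∈ C) (hxa : x ≠ a) : p x ∈ C :=
  ((hD x hx hxa).2.1 ▸ mem_insert (p x) {x} : p x ∈ Icc (p x) x ∩ C).2

theorem pred_le (hD : IsGapFilling rel a C p D) (hx : x ∈ C) (hxa : x ≠ a) : p x ≤ x :=
  (hD.chain hx hxa).le

theorem le_or_le_of_mem (hC : IsChain (· ≤ ·) C) (hD : IsGapFilling rel a C p D) (hx : x ∈ C)
    (hxa : x ≠ a) {z : Q} (hz : z ∈ C) : z ≤ p x ∨ x ≤ z :=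
  hC.le_or_le_of_Icc_inter_eq_pair (hD x hx hxa).2.1 hz

theorem mem_Icc (hD : IsGapFilling rel a C p D) (hx : x ∈ C) (hxa : x ≠ a) {z : Q}
    (hz : z ∈ D x) : z ∈ Icc (p x) x :=
  (hD.chain hx hxa).mem_Icc hz

theorem mem_Icc_of_mem_fillGaps (hC : IsCompleteLowerGapChain R a b C)
    (hD : IsGapFilling rel a C p D) (he : e ∈ fillGaps a C D) : e ∈ Icc a b := by
  rcases he with he | ⟨x, hx, hxa, he⟩
  · exact hC.mem_Icc he
  · exact ⟨(hC.mem_Icc (hD.pred_mem hx hxa)).1.trans (hD.mem_Icc hx hxa he).1,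
      (hD.mem_Icc hx hxa he).2.trans (hC.mem_Icc hx).2⟩

theorem le_or_le_or_mem_of_mem_fillGaps (hC : IsChain (· ≤ ·) C) (hD : IsGapFilling rel a C p D)
    (he : e ∈ fillGaps a C D) (hx : x ∈ C) (hxa : x ≠ a) : e ≤ p x ∨ x ≤ e ∨ e ∈ D x := by
  rcases he with he | ⟨y, hy, hya, he⟩
  · exact (hD.le_or_le_of_mem hC hx hxa he).imp_right Or.inl
  obtain ⟨hpe, hey⟩ := hD.mem_Icc hy hya he
  rcases hD.le_or_le_of_mem hC hx hxa hy with hyp | hxy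
  · exact Or.inl (hey.trans hyp)
  rcases eq_or_ne y x with rfl | hyx
  · exact Or.inr (Or.inr he)
  rcases hD.le_or_le_of_mem hC hy hya hx with hxp | hyx'
  · exact Or.inr (Or.inl (hxp.trans hpe))
  · exact absurd (le_antisymm hyx' hxy) hyx

theorem le_or_le_of_mem_fillGaps (hC : IsCompleteLowerGapChain R a b C)
    (hD : IsGapFilling rel a C p D) (he : e ∈ fillGaps a C D) {y : Q} (hy : y ∈ C) :
    e ≤ y ∨ y ≤ e := by
  rcases eq_or_ne y a with rfl | hya
  · exact Or.inr (hD.mem_Icc_of_mem_fillGaps hC he).1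
  rcases hD.le_or_le_or_mem_of_mem_fillGaps hC.isChain he hy hya with hep | hye | he'
  · exact Or.inl (hep.trans (hD.pred_le hy hya))
  · exact Or.inr hye
  · exact Or.inl (hD.mem_Icc hy hya he').2

theorem isChain_fillGaps (hC : IsCompleteLowerGapChain R a b C) (hD : IsGapFilling rel a C p D) :
    IsChain (· ≤ ·) (fillGaps a C D) := by
  rintro e he f (hf | ⟨x, hx, hxa, hf⟩) -
  · exact hD.le_or_le_of_mem_fillGaps hC he hf
  rcases hD.le_or_le_or_mem_of_mem_fillGaps hC.isChain he hx hxa with hep | hxe | heD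
  · exact Or.inl (hep.trans (hD.mem_Icc hx hxa hf).1)
  · exact Or.inr ((hD.mem_Icc hx hxa hf).2.trans hxe)
  · exact (hD.chain hx hxa).isChain.total heD hf

theorem exists_pred_le_le_of_notMem (hC : IsCompleteLowerGapChain R a b C)
    (hD : IsGapFilling rel a C p D) (hm : m ∈ Icc a b) (hmC : m ∉ C)
    (hcomp : ∀ y ∈ C, m ≤ y ∨ y ≤ m) : ∃ x ∈ C, x ≠ a ∧ p x ≤ m ∧ m ≤ x := by
  set v := sInf {y ∈ C | m ≤ y}
  have hvC : v ∈ C := hC.sInf_mem (sep_subset _ _) ⟨b, hC.right_mem, hm.2⟩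
  have hmv : m ≤ v := le_sInf fun y hy => hy.2
  have hva : v ≠ a := fun hva => hmC (le_antisymm (hva ▸ hmv) hm.1 ▸ hC.left_mem)
  refine ⟨v, hvC, hva, (hcomp _ (hD.pred_mem hvC hva)).resolve_left fun hmp => ?_, hmv⟩
  exact hD.pred_ne hvC hva
    (le_antisymm (hD.pred_le hvC hva) (sInf_le ⟨hD.pred_mem hvC hva, hmp⟩))

theorem sInf_mem_fillGaps (hC : IsCompleteLowerGapChain R a b C) (hD : IsGapFilling rel a C p D)
    {N : Set Q} (hN : N ⊆ fillGaps a C D) (hne : N.Nonempty) : sInf N ∈ fillGaps a C D := by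
  by_cases hmC : sInf N ∈ C
  · exact Or.inl hmC
  obtain ⟨n₀, hn₀⟩ := hne
  have hm : sInf N ∈ Icc a b :=
    ⟨le_sInf fun n hn => (hD.mem_Icc_of_mem_fillGaps hC (hN hn)).1,
      (sInf_le hn₀).trans (hD.mem_Icc_of_mem_fillGaps hC (hN hn₀)).2⟩
  obtain ⟨x, hx, hxa, hpm, hmx⟩ := hD.exists_pred_le_le_of_notMem hC hm hmC fun y hy =>
    sInf_le_or_le_sInf fun n hn => hD.le_or_le_of_mem_fillGaps hC (hN hn) hy
  have hle_of_notMem : ∀ n ∈ N, n ∉ D x → x ≤ n := by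
    intro n hn hnD
    rcases hD.le_or_le_or_mem_of_mem_fillGaps hC.isChain (hN hn) hx hxa with hnp | hxn | hnD'
    · exact absurd (le_antisymm hpm ((sInf_le hn).trans hnp) ▸ hD.pred_mem hx hxa) hmC
    · exact hxn
    · exact absurd hnD' hnD
  have hND : (N ∩ D x).Nonempty := by
    by_contra hempty
    exact hmC (le_antisymm hmx (le_sInf fun n hn =>
      hle_of_notMem n hn fun hnD => hempty ⟨n, hn, hnD⟩) ▸ hx)
  obtain ⟨n₁, hn₁⟩ := hND
  have heq : sInf (N ∩ D x) = sInf N := sInf_inter_eq_sInf fun n hn hnD =>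
    (sInf_le hn₁).trans ((hD.mem_Icc hx hxa hn₁.2).2.trans (hle_of_notMem n hn hnD))
  exact subset_fillGaps hx hxa (heq ▸ (hD.chain hx hxa).sInf_mem inter_subset_right ⟨n₁, hn₁⟩)

theorem sSup_mem_fillGaps (hC : IsCompleteLowerGapChain R a b C) (hD : IsGapFilling rel a C p D)
    {N : Set Q} (hN : N ⊆ fillGaps a C D) (hne : N.Nonempty) : sSup N ∈ fillGaps a C D := by
  by_cases hmC : sSup N ∈ C
  · exact Or.inl hmC
  obtain ⟨n₀, hn₀⟩ := hne
  have hm : sSup N ∈ Icc a b :=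
    ⟨(hD.mem_Icc_of_mem_fillGaps hC (hN hn₀)).1.trans (le_sSup hn₀),
      sSup_le fun n hn => (hD.mem_Icc_of_mem_fillGaps hC (hN hn)).2⟩
  obtain ⟨x, hx, hxa, hpm, hmx⟩ := hD.exists_pred_le_le_of_notMem hC hm hmC fun y hy =>
    sSup_le_or_le_sSup fun n hn => hD.le_or_le_of_mem_fillGaps hC (hN hn) hy
  have hle_of_notMem : ∀ n ∈ N, n ∉ D x → n ≤ p x := by
    intro n hn hnD
    rcases hD.le_or_le_or_mem_of_mem_fillGaps hC.isChain (hN hn) hx hxa with hnp | hxn | hnD'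
    · exact hnp
    · exact absurd (le_antisymm hmx (hxn.trans (le_sSup hn)) ▸ hx) hmC
    · exact absurd hnD' hnD
  have hND : (N ∩ D x).Nonempty := by
    by_contra hempty
    exact hmC (le_antisymm (sSup_le fun n hn =>
      hle_of_notMem n hn fun hnD => hempty ⟨n, hn, hnD⟩) hpm ▸ hD.pred_mem hx hxa)
  obtain ⟨n₁, hn₁⟩ := hND
  have heq : sSup (N ∩ D x) = sSup N := sSup_inter_eq_sSup fun n hn hnD =>
    (hle_of_notMem n hn hnD).trans ((hD.mem_Icc hx hxa hn₁.2).1.trans (le_sSup hn₁))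
  exact subset_fillGaps hx hxa (heq ▸ (hD.chain hx hxa).sSup_mem inter_subset_right ⟨n₁, hn₁⟩)

theorem exists_pred_fillGaps (hC : IsChain (· ≤ ·) C) (hD : IsGapFilling rel a C p D)
    (he : e ∈ fillGaps a C D) (hea : e ≠ a) :
    ∃ q ∈ fillGaps a C D, q ≠ e ∧ rel q e ∧ Icc q e ∩ fillGaps a C D = {q, e} := by
  obtain ⟨x, hx, hxa, heD, hep⟩ : ∃ x ∈ C, x ≠ a ∧ e ∈ D x ∧ e ≠ p x := by
    by_cases heC : e ∈ C
    · exact ⟨e, heC, hea, (hD.chain heC hea).right_mem, (hD.pred_ne heC hea).symm⟩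
    · obtain ⟨x, hx, hxa, heD⟩ := he.resolve_left heC
      exact ⟨x, hx, hxa, heD, fun h => heC (h ▸ hD.pred_mem hx hxa)⟩
  obtain ⟨q, hqD, hqe, hrel, hgap⟩ := (hD.chain hx hxa).exists_pred heD hep
  refine ⟨q, subset_fillGaps hx hxa hqD, hqe, hrel, Subset.antisymm ?_
    (hgap ▸ inter_subset_inter_right _ (subset_fillGaps hx hxa))⟩
  rintro f ⟨hf, hfE⟩
  rcases hD.le_or_le_or_mem_of_mem_fillGaps hC hfE hx hxa with hfp | hxf | hfD
  · exact Or.inl (le_antisymm (hfp.trans (hD.mem_Icc hx hxa hqD).1) hf.1)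
  · exact Or.inr (le_antisymm hf.2 ((hD.mem_Icc hx hxa heD).2.trans hxf))
  · exact hgap ▸ ⟨hf, hfD⟩

theorem isCompleteLowerGapChain_fillGaps (hC : IsCompleteLowerGapChain R a b C)
    (hD : IsGapFilling rel a C p D) : IsCompleteLowerGapChain rel a b (fillGaps a C D) :=
  ⟨hD.isChain_fillGaps hC, Or.inl hC.left_mem, Or.inl hC.right_mem,
    le_antisymm (sInf_le (Or.inl hC.left_mem))
      (le_sInf fun _ he => (hD.mem_Icc_of_mem_fillGaps hC he).1),
    le_antisymm (sSup_le fun _ he => (hD.mem_Icc_of_mem_fillGaps hC he).2)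
      (le_sSup (Or.inl hC.right_mem)),
    fun _ => hD.sInf_mem_fillGaps hC, fun _ => hD.sSup_mem_fillGaps hC,
    fun _ => hD.exists_pred_fillGaps hC.isChain⟩

end IsGapFilling

theorem relTri.le (h : relTri rel a b) : a ≤ b :=
  h.elim le_of_eq fun ⟨_, hC⟩ => hC.le

theorem relTri_of_isCompleteLowerGapChain_relTri
    (h : IsCompleteLowerGapChain (relTri rel) a b C) : relTri rel a b := by
  have hfill : ∀ x ∈ C, x ≠ a → ∃ p D, p ≠ x ∧ Icc p x ∩ C = {p, x} ∧
      IsCompleteLowerGapChain rel p x D := by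
    intro x hx hxa
    obtain ⟨p, -, hpx, hrel, hgap⟩ := h.exists_pred hx hxa
    obtain ⟨D, hD⟩ := hrel.resolve_left hpx
    exact ⟨p, D, hpx, hgap, hD⟩
  choose! p D hD using hfill
  exact Or.inr ⟨_, IsGapFilling.isCompleteLowerGapChain_fillGaps h hD⟩

theorem relTri_trans (hab : relTri rel a b) (hbc : relTri rel b c) : relTri rel a c := by
  rcases eq_or_ne a b with rfl | hne₁
  · exact hbc
  rcases eq_or_ne b c with rfl | hne₂
  · exact hab
  exact relTri_of_isCompleteLowerGapChain_relTri
    (IsCompleteLowerGapChain.triple hab.le hbc.le hne₁ hne₂ hab hbc)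

theorem relTri_relTri : relTri (relTri rel) = relTri rel := by
  ext a b
  refine ⟨fun h => h.elim Or.inl fun ⟨_, hC⟩ => relTri_of_isCompleteLowerGapChain_relTri hC,
    fun h => ?_⟩
  rcases eq_or_ne a b with rfl | hne
  · exact Or.inl rfl
  · exact Or.inr ⟨_, .pair h.le hne h⟩

end GapChains

theorem stmt12_general {Q : Type*} [CompleteLattice Q] (rel : Q → Q → Prop) :
    Transitive (relTri rel) ∧ relTri (relTri rel) = relTri rel :=
  ⟨fun _ _ _ => relTri_trans, relTri_relTri⟩

theorem stmt12 {Q : Type*} [CompleteLattice Q] (rel : Q → Q → Prop)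
    (hrefl : ∀ a, rel a a) (hstr : ∀ a b, rel a b → a ≤ b) :
    Transitive (relTri rel) ∧ relTri (relTri rel) = relTri rel :=
  stmt12_general rel
end

section
/- Let Q be a complete lattice and ≪ a down-expanded transitive reflexive relation stronger than ≤. Then ≪ = ≪^◁, i.e., if there exists a complete lower ≪-gap chain from a to b then a ≪ b. -/
section

variable {Q : Type*} [CompleteLattice Q] {a b : Q}

theorem sInf_mem_pair_of_subset (hab : a ≤ b ∨ b ≤ a) {N : Set Q} (hN : N ⊆ {a, b})
    (hne : N.Nonempty) : sInf N ∈ ({a, b} : Set Q) := by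
  rcases Set.subset_pair_iff_eq.mp hN with rfl | rfl | rfl | rfl
  · exact absurd hne Set.not_nonempty_empty
  all_goals rcases hab with h | h <;> simp [h]

theorem sSup_mem_pair_of_subset (hab : a ≤ b ∨ b ≤ a) {N : Set Q} (hN : N ⊆ {a, b})
    (hne : N.Nonempty) : sSup N ∈ ({a, b} : Set Q) := by
  rcases Set.subset_pair_iff_eq.mp hN with rfl | rfl | rfl | rfl
  · exact absurd hne Set.not_nonempty_empty
  all_goals rcases hab with h | h <;> simp [h]

theorem isCompleteLowerGapChain_pair {rel : Q → Q → Prop} (hr : rel a b) (hle : a ≤ b)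
    (hne : a ≠ b) : IsCompleteLowerGapChain rel a b {a, b} := by
  refine ⟨IsChain.pair hle, by simp, by simp, by simp [hle], by simp [hle],
    fun N hN hNne => sInf_mem_pair_of_subset (.inl hle) hN hNne,
    fun N hN hNne => sSup_mem_pair_of_subset (.inl hle) hN hNne, ?_⟩
  rintro x (rfl | rfl) hxa
  · exact absurd rfl hxa
  · refine ⟨a, by simp, hne, hr, ?_⟩
    ext y
    simp only [Set.mem_inter_iff, Set.mem_Icc, Set.mem_insert_iff, Set.mem_singleton_iff]
    constructor
    · exact fun h => h.2
    · rintro (rfl | rfl) <;> simp [hle]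

theorem rel_of_isCompleteLowerGapChain {rel : Q → Q → Prop}
    (hrefl : ∀ a, rel a a) (hstr : ∀ a b, rel a b → a ≤ b)
    (htrans : ∀ a b c, rel a b → rel b c → rel a c)
    (hde : ∀ b, ∀ N : Set Q, N.Nonempty → (∀ x ∈ N, rel x b) → rel (sInf N) b)
    {C : Set Q} (hC : IsCompleteLowerGapChain rel a b C) : rel a b := by
  obtain ⟨-, -, hbC, -, -, hinf, -, hgap⟩ := hC
  set S : Set Q := {x ∈ C | rel x b}
  have hSne : S.Nonempty := ⟨b, hbC, hrefl b⟩
  have hmC : sInf S ∈ C := hinf S (fun x hx => hx.1) hSne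
  have hmb : rel (sInf S) b := hde b S hSne fun x hx => hx.2
  by_contra hab
  obtain ⟨p, hpC, hpm, hpmrel, -⟩ := hgap (sInf S) hmC (by rintro rfl; exact hab hmb)
  have hmp : sInf S ≤ p := sInf_le ⟨hpC, htrans p _ b hpmrel hmb⟩
  exact hpm (le_antisymm (hstr p _ hpmrel) hmp)

end

theorem stmt13 {Q : Type*} [CompleteLattice Q] (rel : Q → Q → Prop)
    (hrefl : ∀ a, rel a a) (hstr : ∀ a b, rel a b → a ≤ b)
    (htrans : ∀ a b c, rel a b → rel b c → rel a c)
    (hde : ∀ b, ∀ N : Set Q, N.Nonempty → (∀ x ∈ N, rel x b) → rel (sInf N) b) :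
    ∀ a b : Q, rel a b ↔
      (a = b ∨ ∃ C : Set Q, IsCompleteLowerGapChain rel a b C) := by
  intro a b
  constructor
  · intro hab
    by_cases hne : a = b
    · exact Or.inl hne
    · exact Or.inr ⟨{a, b}, isCompleteLowerGapChain_pair hab (hstr a b hab) hne⟩
  · rintro (rfl | ⟨C, hC⟩)
    · exact hrefl a
    · exact rel_of_isCompleteLowerGapChain hrefl hstr htrans hde hC
end
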